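/- Let σ, τ be weight functions in the class W₀ with associated weight matrices {S^(ℓ) : ℓ > 0} and {T^(ℓ) : ℓ > 0}. Then: (a) if σ(t) = O(τ(t)) as t → +∞, then for every j > 0 there exists ℓ > 0 with T^(j) ≼ S^(ℓ), and for every ℓ > 0 there exists j > 0 with T^(j) ≼ S^(ℓ); (b) if σ or τ satisfies condition (ω₁) and there exist j, ℓ > 0 with T^(j) ≼ S^(ℓ), then σ(t) = O(τ(t)) as t → +∞. -/

import Mathlib

open Real Filter Asymptotics Set
open scoped ENNReal Topology

noncomputable section

/-- A weight function: nonnegative, non-decreasing on `[0,∞)`, tending to `+∞`. -/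
def IsWeightFct (ω : ℝ → ℝ) : Prop :=
  (∀ t : ℝ, 0 ≤ ω t) ∧ MonotoneOn ω (Ici (0:ℝ)) ∧ Tendsto ω atTop atTop

/-- Condition `(ω₁)`: `ω(2t) = O(ω(t))`. -/
def HasOm1 (ω : ℝ → ℝ) : Prop :=
  ∃ L : ℝ, 1 ≤ L ∧ ∀ t : ℝ, 0 ≤ t → ω (2 * t) ≤ L * (ω t + 1)

/-- Condition `(ω₆)`. -/
def HasOm6 (ω : ℝ → ℝ) : Prop :=
  ∃ H : ℝ, 1 ≤ H ∧ ∀ t : ℝ, 0 ≤ t → 2 * ω t ≤ ω (H * t) + H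

/-- The class `W₀` of (normalized) Braun-Meise-Taylor weight functions. -/
def IsW0 (ω : ℝ → ℝ) : Prop :=
  IsWeightFct ω ∧ ContinuousOn ω (Ici (0:ℝ)) ∧ (∀ t ∈ Icc (0:ℝ) 1, ω t = 0) ∧
    ((fun t : ℝ => Real.log t) =o[atTop] ω) ∧
    ConvexOn ℝ univ (fun y : ℝ => ω (Real.exp y))

/-- Legendre-Fenchel-Young conjugate `φ*_ω`. -/
def phiStar (ω : ℝ → ℝ) (x : ℝ) : ℝ :=
  sSup {z : ℝ | ∃ y : ℝ, 0 ≤ y ∧ z = x * y - ω (Real.exp y)}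

/-- The sequence `W^(ℓ)` of the associated weight matrix of `ω`. -/
def assocSeq (ω : ℝ → ℝ) (ℓ : ℝ) (p : ℕ) : ℝ :=
  Real.exp ((1 / ℓ) * phiStar ω (ℓ * (p : ℝ)))

/-- The weight function `ω_M` associated with a sequence `M`. -/
def omegaSeq (M : ℕ → ℝ) (t : ℝ) : ℝ :=
  sSup {z : ℝ | ∃ p : ℕ, z = Real.log (t ^ p / M p)}

/-- Property `(P_{ω,γ})`. -/
def gammaProp (ω : ℝ → ℝ) (g : ℝ) : Prop :=
  ∃ K : ℝ, 1 < K ∧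
    limsup (fun t : ℝ => ((ω (K ^ g * t) / ω t : ℝ) : EReal)) atTop < (K : EReal)

/-- Property `(P̄_{ω,γ})`. -/
def gammaBarProp (ω : ℝ → ℝ) (g : ℝ) : Prop :=
  ∃ A : ℝ, 1 < A ∧
    (A : EReal) < liminf (fun t : ℝ => ((ω (A ^ g * t) / ω t : ℝ) : EReal)) atTop

/-- The growth index `γ(ω) ∈ [0,∞]`. -/
def gammaIdx (ω : ℝ → ℝ) : ℝ≥0∞ :=
  ⨆ (g : ℝ) (_ : 0 < g ∧ gammaProp ω g), ENNReal.ofReal g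

/-- The growth index `γ̄(ω) ∈ [0,∞]` (`+∞` if no admissible `γ` exists). -/
def gammaBarIdx (ω : ℝ → ℝ) : ℝ≥0∞ :=
  sInf (ENNReal.ofReal '' {g : ℝ | 0 < g ∧ gammaBarProp ω g})

/-- Generalized lower Legendre conjugate `σ ⋆̌ τ`. -/
def lowerConj (σ τ : ℝ → ℝ) (t : ℝ) : ℝ :=
  sInf {z : ℝ | ∃ s : ℝ, 0 < s ∧ z = σ s + τ (t / s)}

/-- Generalized upper Legendre conjugate `σ ⋆̂ τ`. -/
def upperConj (σ τ : ℝ → ℝ) (t : ℝ) : ℝ :=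
  if t = 0 then σ 0 - τ 0 else sSup {z : ℝ | ∃ s : ℝ, 0 ≤ s ∧ z = σ s - τ (s / t)}

/-- `σ ⋆̂ τ` is well-defined, i.e. `σ⋆̂τ(t) < +∞` for every `t`. -/
def UpperConjWD (σ τ : ℝ → ℝ) : Prop :=
  ∀ t : ℝ, 0 < t → BddAbove {z : ℝ | ∃ s : ℝ, 0 ≤ s ∧ z = σ s - τ (s / t)}

/-- Lower Legendre envelope `h_⋆`. -/
def lowerEnv (h : ℝ → ℝ) (t : ℝ) : ℝ :=
  sInf {z : ℝ | ∃ u : ℝ, 0 < u ∧ z = h u + t * u}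

/-- Upper Legendre envelope `h^⋆`. -/
def upperEnv (h : ℝ → ℝ) (t : ℝ) : ℝ :=
  sSup {z : ℝ | ∃ s : ℝ, 0 ≤ s ∧ z = h s - t * s}

/-- `(((ω^ι)^α)_⋆)^{1/α}` (which equals `ω ⋆̌ id^{1/α}`). -/
def lowerCompose (ω : ℝ → ℝ) (α : ℝ) (t : ℝ) : ℝ :=
  lowerEnv (fun u : ℝ => ω (1 / u ^ α)) (t ^ (1 / α))

/-- `(((ω^α)^⋆)^ι)^{1/α}` (which equals `ω ⋆̂ id^{1/α}`). -/
def upperCompose (ω : ℝ → ℝ) (α : ℝ) (t : ℝ) : ℝ :=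
  upperEnv (fun s : ℝ => ω (s ^ α)) (1 / t ^ (1 / α))

/-- Equivalence `σ ∼ τ` of weight functions. -/
def WeightEquiv (σ τ : ℝ → ℝ) : Prop :=
  σ =O[atTop] τ ∧ τ =O[atTop] σ

/-- Relation `M ≼ N` for sequences: `sup_{p ≥ 1} (M_p/N_p)^{1/p} < ∞`. -/
def seqPrec (M N : ℕ → ℝ) : Prop :=
  ∃ C : ℝ, ∀ p : ℕ, 1 ≤ p → (M p / N p) ^ (1 / (p : ℝ)) ≤ C

/-- Relation `M ◁ N` for sequences: `(M_p/N_p)^{1/p} → 0`. -/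
def seqTriangle (M N : ℕ → ℝ) : Prop :=
  Tendsto (fun p : ℕ => (M p / N p) ^ (1 / (p : ℝ))) atTop (𝓝 0)

/-- Equivalence `M ≈ N` of sequences. -/
def seqEquiv (M N : ℕ → ℝ) : Prop := seqPrec M N ∧ seqPrec N M

/-- The Gevrey sequence `G^α`. -/
def gevrey (α : ℝ) (p : ℕ) : ℝ := (p.factorial : ℝ) ^ α

/-- The quotient sequence `μ_p = M_p / M_{p-1}`, `μ₀ = 1`. -/
def quotSeq (M : ℕ → ℝ) : ℕ → ℝ
  | 0 => 1
  | (p + 1) => M (p + 1) / M p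

/-- Condition `(β,Q)`: `liminf_{p} μ_{Qp}/μ_p > Q^β`. -/
def condBQ (M : ℕ → ℝ) (β : ℝ) (Q : ℕ) : Prop :=
  ((((Q : ℝ) ^ β : ℝ)) : EReal) <
    liminf (fun p : ℕ => ((quotSeq M (Q * p) / quotSeq M p : ℝ) : EReal)) atTop

/-- Thilliez's growth index `γ(M) ∈ [0,∞]`. -/
def thilliezIdx (M : ℕ → ℝ) : ℝ≥0∞ :=
  ⨆ (β : ℝ) (_ : 0 ≤ β ∧ ∃ Q : ℕ, 2 ≤ Q ∧ condBQ M β Q), ENNReal.ofReal β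

/-- The Beurling Gelfand-Shilov space `S_(σ)(ℝ)` (membership predicate). -/
def MemSBeurling (σ : ℝ → ℝ) (f : ℝ → ℂ) : Prop :=
  ContDiff ℝ (⊤ : ℕ∞) f ∧ ∀ ℓ : ℝ, 0 < ℓ → ∃ C : ℝ, ∀ x : ℝ, ∀ j k : ℕ,
    (1 + |x|) ^ k * ‖iteratedDeriv j f x‖ ≤ C * assocSeq σ ℓ (j + k)

/-- The polynomial `ψ(x) = x² + 1/4`. -/
def psiMap (x : ℝ) : ℝ := x ^ 2 + 1 / 4

/-- The resolvent operator `R_μ = ∑_m C_{ψ_m}/μ^{m+1}`. -/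
def Rres (μ : ℂ) (f : ℝ → ℂ) (x : ℝ) : ℂ :=
  ∑' m : ℕ, (μ ^ (m + 1))⁻¹ * f (psiMap^[m] x)

section helpers

variable {ω : ℝ → ℝ}

lemma phiSet_nonempty (hω : IsW0 ω) (x : ℝ) :
    {z : ℝ | ∃ y : ℝ, 0 ≤ y ∧ z = x * y - ω (Real.exp y)}.Nonempty :=
  ⟨x * 0 - ω (Real.exp 0), 0, le_refl 0, rfl⟩

lemma zero_mem_phiSet (hω : IsW0 ω) (x : ℝ) :
    (0:ℝ) ∈ {z : ℝ | ∃ y : ℝ, 0 ≤ y ∧ z = x * y - ω (Real.exp y)} := by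
  refine ⟨0, le_refl 0, ?_⟩
  rw [Real.exp_zero, hω.2.2.1 1 ⟨zero_le_one, le_refl 1⟩]
  ring

lemma phiSet_bddAbove (hω : IsW0 ω) {x : ℝ} (hx : 0 ≤ x) :
    BddAbove {z : ℝ | ∃ y : ℝ, 0 ≤ y ∧ z = x * y - ω (Real.exp y)} := by
  have hlo := hω.2.2.2.1
  have hev : ∀ᶠ t in atTop, ‖Real.log t‖ ≤ (1/(x+1)) * ‖ω t‖ :=
    hlo.def (by positivity)
  obtain ⟨T, hT⟩ := eventually_atTop.mp hev
  set T' : ℝ := max T 1 with hT'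
  have hT'pos : 0 < T' := lt_of_lt_of_le one_pos (le_max_right _ _)
  set y₀ : ℝ := max (Real.log T') 0 with hy₀
  refine ⟨x * y₀, fun z hz => ?_⟩
  obtain ⟨y, hy, rfl⟩ := hz
  rcases le_total y y₀ with h | h
  · have : x * y ≤ x * y₀ := mul_le_mul_of_nonneg_left h hx
    have := hω.1.1 (Real.exp y)
    linarith
  · -- y ≥ y₀, so exp y ≥ T'
    have hge : T' ≤ Real.exp y := by
      calc T' = Real.exp (Real.log T') := (Real.exp_log hT'pos).symm
        _ ≤ Real.exp y := Real.exp_le_exp.2 (le_trans (le_max_left _ _) h)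
    have hbnd := hT (Real.exp y) (le_trans (le_max_left T 1) hge)
    have hyn : 0 ≤ y := le_trans (le_max_right _ _) h
    rw [Real.log_exp] at hbnd
    have hωn : 0 ≤ ω (Real.exp y) := hω.1.1 _
    rw [Real.norm_eq_abs, Real.norm_eq_abs, abs_of_nonneg hyn, abs_of_nonneg hωn] at hbnd
    have hx1 : (x+1) * y ≤ ω (Real.exp y) := by
      have h' : (x+1) * y ≤ (x+1) * (1/(x+1) * ω (Real.exp y)) :=
        mul_le_mul_of_nonneg_left hbnd (by positivity)
      have he : (x+1) * (1/(x+1) * ω (Real.exp y)) = ω (Real.exp y) := by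
        field_simp
      linarith [h', he.symm ▸ h']
    have hxy0 : 0 ≤ x * y₀ := mul_nonneg hx (le_max_right _ _)
    nlinarith
  
lemma phiStar_nonneg (hω : IsW0 ω) {x : ℝ} (hx : 0 ≤ x) : 0 ≤ phiStar ω x :=
  le_csSup (phiSet_bddAbove hω hx) (zero_mem_phiSet hω x)

lemma le_phiStar (hω : IsW0 ω) {x : ℝ} (hx : 0 ≤ x) {y : ℝ} (hy : 0 ≤ y) :
    x * y - ω (Real.exp y) ≤ phiStar ω x :=
  le_csSup (phiSet_bddAbove hω hx) ⟨y, hy, rfl⟩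

lemma phiStar_mono (hω : IsW0 ω) {x₁ x₂ : ℝ} (h0 : 0 ≤ x₁) (h : x₁ ≤ x₂) :
    phiStar ω x₁ ≤ phiStar ω x₂ := by
  refine csSup_le (phiSet_nonempty hω x₁) ?_
  rintro z ⟨y, hy, rfl⟩
  calc x₁ * y - ω (Real.exp y) ≤ x₂ * y - ω (Real.exp y) := by
        have := mul_le_mul_of_nonneg_right h hy; linarith
    _ ≤ phiStar ω x₂ := le_phiStar hω (le_trans h0 h) hy

end helpers

section helpers2
variable {σ τ : ℝ → ℝ}

lemma phiStar_compare (hσ : IsW0 σ) (hτ : IsW0 τ) {C C' : ℝ} (hC : 0 < C) (hC' : 0 ≤ C')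
    (h : ∀ t : ℝ, 1 ≤ t → σ t ≤ C * τ t + C') {x : ℝ} (hx : 0 ≤ x) :
    C * phiStar τ x ≤ phiStar σ (C * x) + C' := by
  have key : phiStar τ x ≤ (phiStar σ (C * x) + C') / C := by
    refine csSup_le (phiSet_nonempty hτ x) ?_
    rintro z ⟨y, hy, rfl⟩
    rw [le_div_iff₀ hC]
    have h1 : σ (Real.exp y) ≤ C * τ (Real.exp y) + C' :=
      h _ (Real.one_le_exp hy)
    have h2 : (C * x) * y - σ (Real.exp y) ≤ phiStar σ (C * x) :=
      le_phiStar hσ (mul_nonneg hC.le hx) hy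
    nlinarith
  calc C * phiStar τ x ≤ C * ((phiStar σ (C * x) + C') / C) :=
        mul_le_mul_of_nonneg_left key hC.le
    _ = phiStar σ (C * x) + C' := by field_simp

/-- approximate subgradient / biconjugation -/
lemma phiStar_subgrad (hσ : IsW0 σ) {t : ℝ} (ht : 1 ≤ t) :
    ∃ x : ℝ, 0 ≤ x ∧ phiStar σ x ≤ x * Real.log t - σ t + 1 := by
  set y : ℝ := Real.log t with hydef
  have hy : 0 ≤ y := Real.log_nonneg ht
  have hconv : ConvexOn ℝ univ (fun y : ℝ => σ (Real.exp y)) := hσ.2.2.2.2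
  have hmono : ∀ a b : ℝ, a ≤ b → σ (Real.exp a) ≤ σ (Real.exp b) := fun a b hab =>
    hσ.1.2.1 (mem_Ici.2 (Real.exp_pos a).le) (mem_Ici.2 (Real.exp_pos b).le)
      (Real.exp_le_exp.2 hab)
  set x₁ : ℝ := σ (Real.exp (y+1)) - σ (Real.exp y) with hx₁def
  have hx₁ : 0 ≤ x₁ := sub_nonneg.2 (hmono y (y+1) (by linarith))
  set δ : ℝ := 1/(x₁+1) with hδdef
  have hδpos : 0 < δ := by positivity
  have hδ1 : δ ≤ 1 := by
    rw [hδdef, div_le_one (by positivity)]; linarith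
  set x : ℝ := (σ (Real.exp (y+δ)) - σ (Real.exp y)) / δ with hxdef
  have hx0 : 0 ≤ x := div_nonneg (sub_nonneg.2 (hmono y (y+δ) (by linarith))) hδpos.le
  have hxx₁ : x ≤ x₁ := by
    have hsec := hconv.secant_mono (a := y) (x := y + δ) (y := y + 1)
      (mem_univ _) (mem_univ _) (mem_univ _)
      (ne_of_gt (by linarith))
      (ne_of_gt (by linarith))
      (by linarith)
    simp only [add_sub_cancel_left] at hsec
    calc x = (σ (Real.exp (y+δ)) - σ (Real.exp y)) / δ := rfl
      _ ≤ (σ (Real.exp (y+1)) - σ (Real.exp y)) / 1 := hsec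
      _ = x₁ := by rw [div_one]
  have hxδ : x * δ ≤ 1 := by
    have : x * δ ≤ x₁ * δ := mul_le_mul_of_nonneg_right hxx₁ hδpos.le
    have h2 : x₁ * δ ≤ 1 := by
      rw [hδdef]
      rw [mul_one_div, div_le_one (by positivity)]; linarith
    linarith
  refine ⟨x, hx0, ?_⟩
  have hψy : σ (Real.exp y) = σ t := by
    rw [hydef, Real.exp_log (lt_of_lt_of_le one_pos ht)]
  have key : ∀ y' : ℝ, 0 ≤ y' → x * y' - σ (Real.exp y') ≤ x * y - σ (Real.exp y) + x * δ := by
    intro y' hy'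
    have hxδ0 : 0 ≤ x * δ := mul_nonneg hx0 hδpos.le
    rcases lt_trichotomy y' y with hlt | heq | hgt
    · -- y' < y : slope from y to y' ≤ slope from y to y+δ
      have hsec := hconv.secant_mono (a := y) (x := y') (y := y + δ)
        (mem_univ _) (mem_univ _) (mem_univ _)
        (ne_of_lt hlt) (ne_of_gt (by linarith)) (by linarith)
      simp only [add_sub_cancel_left] at hsec
      have hxge : (σ (Real.exp y') - σ (Real.exp y)) / (y' - y) ≤ x := hsec
      have hneg : y' - y < 0 := by linarith
      have := (div_le_iff_of_neg hneg).mp hxge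
      nlinarith
    · subst heq; linarith
    · rcases le_total y' (y + δ) with hle | hgt2
      · -- y < y' ≤ y+δ
        have h1 : x * (y' - y) ≤ x * δ := mul_le_mul_of_nonneg_left (by linarith) hx0
        have h2 : σ (Real.exp y) ≤ σ (Real.exp y') := hmono _ _ (le_of_lt hgt)
        nlinarith
      · -- y' ≥ y + δ
        have hsec := hconv.secant_mono (a := y) (x := y + δ) (y := y')
          (mem_univ _) (mem_univ _) (mem_univ _)
          (ne_of_gt (by linarith)) (ne_of_gt hgt) hgt2
        simp only [add_sub_cancel_left] at hsec
        have hxle : x ≤ (σ (Real.exp y') - σ (Real.exp y)) / (y' - y) := hsec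
        have hpos : 0 < y' - y := by linarith
        have := (le_div_iff₀ hpos).mp hxle
        nlinarith
  have : phiStar σ x ≤ x * y - σ (Real.exp y) + x * δ := by
    refine csSup_le (phiSet_nonempty hσ x) ?_
    rintro z ⟨y', hy', rfl⟩
    exact key y' hy'
  rw [hψy] at this
  linarith

end helpers2

section parts
variable {σ τ : ℝ → ℝ}

lemma bigO_to_bound (hσ : IsW0 σ) (hτ : IsW0 τ) (h : σ =O[atTop] τ) :
    ∃ C C' : ℝ, 1 ≤ C ∧ 0 ≤ C' ∧ ∀ t : ℝ, 1 ≤ t → σ t ≤ C * τ t + C' := by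
  obtain ⟨c, hc⟩ := isBigO_iff.mp h
  obtain ⟨T, hT⟩ := eventually_atTop.mp hc
  refine ⟨max c 1, σ (max T 1), le_max_right _ _, hσ.1.1 _, fun t ht => ?_⟩
  have hτn : 0 ≤ τ t := hτ.1.1 t
  rcases le_total t (max T 1) with hle | hge
  · have : σ t ≤ σ (max T 1) := hσ.1.2.1 (mem_Ici.2 (by linarith)) (mem_Ici.2 (by positivity)) hle
    nlinarith [mul_nonneg (le_trans zero_le_one (le_max_right c 1)) hτn]
  · have hb := hT t (le_trans (le_max_left T 1) hge)
    rw [Real.norm_eq_abs, Real.norm_eq_abs, abs_of_nonneg (hσ.1.1 t), abs_of_nonneg hτn] at hb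
    have : c * τ t ≤ max c 1 * τ t := mul_le_mul_of_nonneg_right (le_max_left c 1) hτn
    have hσn := hσ.1.1 (max T 1)
    linarith

lemma partA_core (hσ : IsW0 σ) (hτ : IsW0 τ) {C C' : ℝ} (hC : 1 ≤ C) (hC' : 0 ≤ C')
    (h : ∀ t : ℝ, 1 ≤ t → σ t ≤ C * τ t + C') {j : ℝ} (hj : 0 < j) :
    seqPrec (assocSeq τ j) (assocSeq σ (C * j)) := by
  set ℓ : ℝ := C * j with hℓdef
  have hℓ : 0 < ℓ := by positivity
  refine ⟨Real.exp (C' / ℓ), fun p hp => ?_⟩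
  have hCpos : 0 < C := lt_of_lt_of_le one_pos hC
  have hcomp := phiStar_compare hσ hτ hCpos hC' h (x := j * p) (by positivity)
  have hCx : C * (j * (p:ℝ)) = ℓ * p := by rw [hℓdef]; ring
  rw [hCx] at hcomp
  have hstep : (1/j) * phiStar τ (j * p) ≤ (1/ℓ) * phiStar σ (ℓ * p) + C' / ℓ := by
    have e1 : (1/j) * phiStar τ (j * p) = (C * phiStar τ (j * p)) / ℓ := by
      rw [hℓdef]; field_simp
    have e2 : (C * phiStar τ (j * p)) / ℓ ≤ (phiStar σ (ℓ * p) + C') / ℓ := by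
      gcongr
    have e3 : (phiStar σ (ℓ * p) + C') / ℓ = (1/ℓ) * phiStar σ (ℓ * p) + C' / ℓ := by
      ring
    linarith [e1 ▸ e2, e3 ▸ e2]
  have hratio : assocSeq τ j p / assocSeq σ ℓ p ≤ Real.exp (C' / ℓ) := by
    rw [assocSeq, assocSeq, ← Real.exp_sub, Real.exp_le_exp]
    linarith
  have hTpos : (0:ℝ) < assocSeq τ j p := Real.exp_pos _
  have hSpos : (0:ℝ) < assocSeq σ ℓ p := Real.exp_pos _
  have h1 : (assocSeq τ j p / assocSeq σ ℓ p) ^ (1/(p:ℝ)) ≤ (Real.exp (C'/ℓ)) ^ (1/(p:ℝ)) :=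
    Real.rpow_le_rpow (le_of_lt (div_pos hTpos hSpos)) hratio (by positivity)
  have h2 : (Real.exp (C'/ℓ)) ^ (1/(p:ℝ)) ≤ (Real.exp (C'/ℓ)) ^ (1:ℝ) := by
    apply Real.rpow_le_rpow_of_exponent_le (Real.one_le_exp (div_nonneg hC' hℓ.le))
    rw [div_le_one (by exact_mod_cast hp : (0:ℝ) < p)]
    exact_mod_cast hp
  rw [Real.rpow_one] at h2
  linarith

end parts

section partB
variable {σ τ : ℝ → ℝ}

lemma hasOm1_iter {ω : ℝ → ℝ} (hn : ∀ t, 0 ≤ ω t) (h : HasOm1 ω) (k : ℕ) :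
    ∃ L' : ℝ, 1 ≤ L' ∧ ∀ t : ℝ, 0 ≤ t → ω ((2:ℝ)^k * t) ≤ L' * (ω t + 1) := by
  obtain ⟨L, hL, hω⟩ := h
  induction k with
  | zero =>
    refine ⟨1, le_refl 1, fun t ht => ?_⟩
    simp only [pow_zero, one_mul]
    linarith [hn t]
  | succ k ih =>
    obtain ⟨L', hL', hk⟩ := ih
    refine ⟨L * L' + L, by nlinarith, fun t ht => ?_⟩
    have e : (2:ℝ)^(k+1) * t = 2 * ((2:ℝ)^k * t) := by ring
    have h1 : ω ((2:ℝ)^(k+1) * t) ≤ L * (ω ((2:ℝ)^k * t) + 1) := by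
      rw [e]; exact hω _ (by positivity)
    have h2 := hk t ht
    have h3 : (1:ℝ) ≤ ω t + 1 := by linarith [hn t]
    have h4 : L * ω ((2:ℝ)^k * t) ≤ L * (L' * (ω t + 1)) :=
      mul_le_mul_of_nonneg_left h2 (by linarith)
    have h5 : L * 1 ≤ L * (ω t + 1) := mul_le_mul_of_nonneg_left h3 (by linarith)
    nlinarith

lemma partB_main (hσ : IsW0 σ) (hτ : IsW0 τ) {j ℓ : ℝ} (hj : 0 < j) (hl : 0 < ℓ)
    (hprec : seqPrec (assocSeq τ j) (assocSeq σ ℓ)) :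
    ∃ D : ℝ, 1 ≤ D ∧ ∃ t₀ : ℝ, 1 ≤ t₀ ∧ ∀ t : ℝ, t₀ ≤ t →
      σ t ≤ (2*ℓ/j) * τ (D*t) + 2 := by
  obtain ⟨C, hC⟩ := hprec
  set D : ℝ := max C 1 with hDdef
  have hD1 : 1 ≤ D := le_max_right _ _
  have hDpos : 0 < D := lt_of_lt_of_le one_pos hD1
  -- step 1: T_p ≤ D^p S_p and log version
  have hlog : ∀ p : ℕ, 1 ≤ p →
      (1/j) * phiStar τ (j*p) ≤ (1/ℓ) * phiStar σ (ℓ*p) + p * Real.log D := by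
    intro p hp
    have hTpos : (0:ℝ) < assocSeq τ j p := Real.exp_pos _
    have hSpos : (0:ℝ) < assocSeq σ ℓ p := Real.exp_pos _
    have hr : 0 < assocSeq τ j p / assocSeq σ ℓ p := div_pos hTpos hSpos
    have hppos : (0:ℝ) < (p:ℝ) := by exact_mod_cast hp
    have hrD : assocSeq τ j p / assocSeq σ ℓ p ≤ D ^ p := by
      have h1 : (assocSeq τ j p / assocSeq σ ℓ p) ^ (1/(p:ℝ)) ≤ D :=
        le_trans (hC p hp) (le_max_left _ _)
      have h2 : ((assocSeq τ j p / assocSeq σ ℓ p) ^ (1/(p:ℝ))) ^ (p:ℕ)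
          = assocSeq τ j p / assocSeq σ ℓ p := by
        rw [← Real.rpow_natCast ((assocSeq τ j p / assocSeq σ ℓ p) ^ (1/(p:ℝ))) p,
          ← Real.rpow_mul hr.le, one_div, inv_mul_cancel₀ (ne_of_gt hppos), Real.rpow_one]
      calc assocSeq τ j p / assocSeq σ ℓ p
          = ((assocSeq τ j p / assocSeq σ ℓ p) ^ (1/(p:ℝ))) ^ (p:ℕ) := h2.symm
        _ ≤ D ^ p := pow_le_pow_left₀ (Real.rpow_nonneg hr.le _) h1 p
    have hT_le : assocSeq τ j p ≤ D ^ p * assocSeq σ ℓ p := by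
      rw [div_le_iff₀ hSpos] at hrD; linarith
    have hll := Real.log_le_log hTpos hT_le
    rw [Real.log_mul (by positivity) (ne_of_gt hSpos), Real.log_pow,
      assocSeq, assocSeq, Real.log_exp, Real.log_exp] at hll
    linarith
  -- step 2: main pointwise bound for t ≥ 1
  have hmain : ∀ t : ℝ, 1 ≤ t → σ t ≤ ℓ * Real.log t + (ℓ/j) * τ (D*t) + 1 := by
    intro t ht
    have htpos : 0 < t := lt_of_lt_of_le one_pos ht
    have hu : 0 ≤ Real.log t := Real.log_nonneg ht
    have hDt1 : 1 ≤ D * t := by nlinarith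
    have hDtpos : 0 < D * t := by positivity
    have hτn : 0 ≤ τ (D*t) := hτ.1.1 _
    obtain ⟨x, hx0, hxkey⟩ := phiStar_subgrad hσ ht
    set p : ℕ := ⌊x/ℓ⌋₊ with hpdef
    have hp1 : ℓ * (p:ℝ) ≤ x := by
      have h1 : (p:ℝ) ≤ x/ℓ := Nat.floor_le (div_nonneg hx0 hl.le)
      calc ℓ * (p:ℝ) ≤ ℓ * (x/ℓ) := mul_le_mul_of_nonneg_left h1 hl.le
        _ = x := by field_simp
    have hp2 : x ≤ ℓ * ((p:ℝ)+1) := by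
      have h1 : x/ℓ < (p:ℝ)+1 := Nat.lt_floor_add_one (x/ℓ)
      have := mul_lt_mul_of_pos_left h1 hl
      rw [mul_div_cancel₀ x (ne_of_gt hl)] at this
      linarith
    rcases Nat.eq_zero_or_pos p with hp0 | hppos
    · -- p = 0 : x ≤ ℓ
      have hxl : x ≤ ℓ := by rw [hp0] at hp2; push_cast at hp2; linarith
      have hφ : 0 ≤ phiStar σ x := phiStar_nonneg hσ hx0
      have hxu : x * Real.log t ≤ ℓ * Real.log t := mul_le_mul_of_nonneg_right hxl hu
      have hτ' : 0 ≤ (ℓ/j) * τ (D*t) := mul_nonneg (by positivity) hτn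
      linarith
    · -- p ≥ 1
      have hplog := hlog p hppos
      set u : ℝ := Real.log t with hudef
      set v : ℝ := Real.log D with hvdef
      have hv0 : 0 ≤ v := Real.log_nonneg hD1
      have hlogDt : Real.log (D*t) = v + u := by
        rw [hudef, hvdef, Real.log_mul (ne_of_gt hDpos) (ne_of_gt htpos)]
      have hF1 : j*(p:ℝ)*(v+u) - τ (D*t) ≤ phiStar τ (j*p) := by
        have := le_phiStar hτ (x := j*(p:ℝ)) (by positivity)
          (y := Real.log (D*t)) (Real.log_nonneg hDt1)
        rw [Real.exp_log hDtpos, hlogDt] at this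
        exact this
      have hF3 : phiStar σ (ℓ*p) ≤ phiStar σ x := phiStar_mono hσ (by positivity) hp1
      -- combine
      have s1 : (p:ℝ)*(v+u) - (1/j) * τ (D*t) ≤ (1/j) * phiStar τ (j*p) := by
        have hm := mul_le_mul_of_nonneg_left hF1 (le_of_lt (by positivity : (0:ℝ) < 1/j))
        have e : (1/j) * (j*(p:ℝ)*(v+u) - τ (D*t)) = (p:ℝ)*(v+u) - (1/j) * τ (D*t) := by
          field_simp
        linarith [e ▸ hm]
      have s2 : (p:ℝ)*u - (1/j) * τ (D*t) ≤ (1/ℓ) * phiStar σ (ℓ*p) := by nlinarith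
      have s3 : (1/ℓ) * phiStar σ (ℓ*p) ≤ (1/ℓ) * (x*u - σ t + 1) :=
        mul_le_mul_of_nonneg_left (le_trans hF3 hxkey) (by positivity)
      have s4 := mul_le_mul_of_nonneg_left (le_trans s2 s3) hl.le
      have e4 : ℓ * ((1/ℓ) * (x*u - σ t + 1)) = x*u - σ t + 1 := by field_simp
      have e5 : ℓ * ((p:ℝ)*u - (1/j) * τ (D*t)) = ℓ*(p:ℝ)*u - (ℓ/j) * τ (D*t) := by ring
      have s5 : ℓ*(p:ℝ)*u - (ℓ/j) * τ (D*t) ≤ x*u - σ t + 1 := by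
        rw [e5, e4] at s4; exact s4
      have s6 : x*u ≤ ℓ*(p:ℝ)*u + ℓ*u := by
        calc x*u ≤ (ℓ*((p:ℝ)+1))*u := mul_le_mul_of_nonneg_right hp2 hu
          _ = ℓ*(p:ℝ)*u + ℓ*u := by ring
      linarith
  -- step 3: absorb ℓ log t using log = o(σ)
  have hlo := hσ.2.2.2.1
  have hev : ∀ᶠ t : ℝ in atTop, ‖Real.log t‖ ≤ (1/(2*ℓ)) * ‖σ t‖ := hlo.def (by positivity)
  obtain ⟨T, hT⟩ := eventually_atTop.mp hev
  refine ⟨D, hD1, max T 1, le_max_right _ _, fun t ht => ?_⟩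
  have ht1 : 1 ≤ t := le_trans (le_max_right T 1) ht
  have hb := hT t (le_trans (le_max_left T 1) ht)
  rw [Real.norm_eq_abs, Real.norm_eq_abs, abs_of_nonneg (Real.log_nonneg ht1),
    abs_of_nonneg (hσ.1.1 t)] at hb
  have hllog : ℓ * Real.log t ≤ σ t / 2 := by
    have := mul_le_mul_of_nonneg_left hb hl.le
    have e : ℓ * ((1/(2*ℓ)) * σ t) = σ t / 2 := by field_simp
    linarith [e ▸ this]
  have := hmain t ht1
  have e2 : (2*ℓ/j) * τ (D*t) = 2 * ((ℓ/j) * τ (D*t)) := by ring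
  linarith [e2 ▸ le_refl ((2*ℓ/j) * τ (D*t))]

end partB

theorem stmt13 (σ τ : ℝ → ℝ) (hσ : IsW0 σ) (hτ : IsW0 τ) :
    ((σ =O[atTop] τ) →
      (∀ j : ℝ, 0 < j → ∃ ℓ : ℝ, 0 < ℓ ∧ seqPrec (assocSeq τ j) (assocSeq σ ℓ)) ∧
      (∀ ℓ : ℝ, 0 < ℓ → ∃ j : ℝ, 0 < j ∧ seqPrec (assocSeq τ j) (assocSeq σ ℓ))) ∧
    ((HasOm1 σ ∨ HasOm1 τ) →
      (∃ j : ℝ, 0 < j ∧ ∃ ℓ : ℝ, 0 < ℓ ∧ seqPrec (assocSeq τ j) (assocSeq σ ℓ)) →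
      σ =O[atTop] τ) := by
  constructor
  · -- part (a)
    intro hbig
    obtain ⟨C, C', hC, hC', hbound⟩ := bigO_to_bound hσ hτ hbig
    have hCpos : 0 < C := lt_of_lt_of_le one_pos hC
    constructor
    · intro j hj
      exact ⟨C * j, by positivity, partA_core hσ hτ hC hC' hbound hj⟩
    · intro ℓ hl
      refine ⟨ℓ / C, by positivity, ?_⟩
      have h := partA_core hσ hτ hC hC' hbound (j := ℓ/C) (by positivity)
      have e : C * (ℓ / C) = ℓ := by field_simp
      rwa [e] at h
  · -- part (b)
    rintro hom1 ⟨j, hj, ℓ, hl, hprec⟩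
    obtain ⟨D, hD1, t₀, ht₀, hmain⟩ := partB_main hσ hτ hj hl hprec
    obtain ⟨k, hk⟩ := pow_unbounded_of_one_lt D (one_lt_two : (1:ℝ) < 2)
    have hDk : D ≤ (2:ℝ)^k := hk.le
    have h2k : (0:ℝ) < 2^k := by positivity
    have hlj : (0:ℝ) ≤ 2*ℓ/j := by positivity
    have final : ∃ A B t₁ : ℝ, 0 ≤ A ∧ ∀ t : ℝ, t₁ ≤ t → σ t ≤ A * τ t + B := by
      rcases hom1 with hσ1 | hτ1
      · obtain ⟨L', hL', hLk⟩ := hasOm1_iter hσ.1.1 hσ1 k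
        have hL'0 : (0:ℝ) ≤ L' := by linarith
        refine ⟨L' * (2*ℓ/j), L' * 3, 2^k * t₀, mul_nonneg hL'0 hlj, fun s hs => ?_⟩
        have hs0 : (0:ℝ) ≤ s := le_trans (by nlinarith) hs
        have hst : t₀ ≤ s / 2^k := by
          rw [le_div_iff₀ h2k]; nlinarith
        have he : (2:ℝ)^k * (s / 2^k) = s := by field_simp
        have h1 : σ s ≤ L' * (σ (s/2^k) + 1) := by
          have := hLk (s/2^k) (by positivity)
          rwa [he] at this
        have h2 : σ (s/2^k) ≤ (2*ℓ/j) * τ (D*(s/2^k)) + 2 := hmain _ hst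
        have h3 : τ (D*(s/2^k)) ≤ τ s := by
          refine hτ.1.2.1 (mem_Ici.2 (by positivity)) (mem_Ici.2 hs0) ?_
          calc D * (s/2^k) ≤ 2^k * (s/2^k) :=
                mul_le_mul_of_nonneg_right hDk (by positivity)
            _ = s := he
        have h4 : (2*ℓ/j) * τ (D*(s/2^k)) ≤ (2*ℓ/j) * τ s :=
          mul_le_mul_of_nonneg_left h3 hlj
        have h5 : σ (s/2^k) + 1 ≤ (2*ℓ/j) * τ s + 3 := by linarith
        have h6 : L' * (σ (s/2^k) + 1) ≤ L' * ((2*ℓ/j) * τ s + 3) :=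
          mul_le_mul_of_nonneg_left h5 hL'0
        calc σ s ≤ L' * ((2*ℓ/j) * τ s + 3) := le_trans h1 h6
          _ = L' * (2*ℓ/j) * τ s + L' * 3 := by ring
      · obtain ⟨L', hL', hLk⟩ := hasOm1_iter hτ.1.1 hτ1 k
        have hL'0 : (0:ℝ) ≤ L' := by linarith
        refine ⟨(2*ℓ/j) * L', (2*ℓ/j) * L' + 2, max t₀ 0, mul_nonneg hlj hL'0, fun t ht => ?_⟩
        have h1 := hmain t (le_trans (le_max_left _ _) ht)
        have ht0 : (0:ℝ) ≤ t := le_trans (le_max_right _ _) ht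
        have h2 : τ (D*t) ≤ τ ((2:ℝ)^k * t) := by
          refine hτ.1.2.1 (mem_Ici.2 (by positivity)) (mem_Ici.2 (by positivity)) ?_
          exact mul_le_mul_of_nonneg_right hDk ht0
        have h3 := hLk t ht0
        have h4 : (2*ℓ/j) * τ (D*t) ≤ (2*ℓ/j) * (L' * (τ t + 1)) :=
          mul_le_mul_of_nonneg_left (le_trans h2 h3) hlj
        calc σ t ≤ (2*ℓ/j) * τ (D*t) + 2 := h1
          _ ≤ (2*ℓ/j) * (L' * (τ t + 1)) + 2 := by linarith
          _ = (2*ℓ/j) * L' * τ t + ((2*ℓ/j) * L' + 2) := by ring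
    obtain ⟨A, B, t₁, hA, hfin⟩ := final
    have hevτ : ∀ᶠ t : ℝ in atTop, B ≤ τ t := (hτ.1.2.2).eventually_ge_atTop B
    rw [isBigO_iff]
    refine ⟨A + 1, ?_⟩
    filter_upwards [eventually_ge_atTop t₁, hevτ] with t h1 h2
    rw [Real.norm_eq_abs, Real.norm_eq_abs, abs_of_nonneg (hσ.1.1 t), abs_of_nonneg (hτ.1.1 t)]
    have := hfin t h1
    nlinarith
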